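/- Let λ be an antidominant composition, let 0 ≤ r ≤ n−1, and let μ = π^r(λ). Then every non-attacking filling σ of dg'(μ) satisfies T(σ) ≤ 0. -/
import Mathlib



open Finset

namespace CO

/-- The column diagram `dg'(λ)` of a composition, as a finset of boxes `(i, j)`,
`1 ≤ i ≤ n`, `1 ≤ j ≤ λ_i`. -/
def dgF (n : ℕ) (lam : ℕ → ℕ) : Finset (ℕ × ℕ) :=
  (Finset.Icc 1 n).biUnion fun i => (Finset.Icc 1 (lam i)).image fun j => (i, j)

/-- The augmented diagram `d̂g(λ)`: one extra box `(i, 0)` below each column. -/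
def augF (n : ℕ) (lam : ℕ → ℕ) : Finset (ℕ × ℕ) :=
  dgF n lam ∪ (Finset.Icc 1 n).image fun i => (i, 0)

/-- The box `d(u)` directly below a box. -/
def dbox (u : ℕ × ℕ) : ℕ × ℕ := (u.1, u.2 - 1)

/-- The augmented filling `σ̂`: equal to `σ` on positive rows and to `i` on `(i, 0)`. -/
def aug (σ : ℕ × ℕ → ℕ) (u : ℕ × ℕ) : ℕ := if u.2 = 0 then u.1 else σ u

/-- A filling takes values in `{1, …, n}` on the diagram. -/
def IsFilling (n : ℕ) (lam : ℕ → ℕ) (σ : ℕ × ℕ → ℕ) : Prop :=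
  ∀ u ∈ dgF n lam, 1 ≤ σ u ∧ σ u ≤ n

/-- Attacking boxes: same row, or consecutive rows with the lower box to the right. -/
def Attack (u v : ℕ × ℕ) : Prop :=
  u ≠ v ∧ (u.2 = v.2 ∨ (u.2 = v.2 + 1 ∧ u.1 < v.1) ∨ (v.2 = u.2 + 1 ∧ v.1 < u.1))

/-- A non-attacking filling: `σ̂` takes distinct values on attacking pairs of the
augmented diagram. -/
def NonAttacking (n : ℕ) (lam : ℕ → ℕ) (σ : ℕ × ℕ → ℕ) : Prop :=
  ∀ u ∈ augF n lam, ∀ v ∈ augF n lam, Attack u v → aug σ u ≠ aug σ v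

/-- The arm of a box `u`. -/
def armF (n : ℕ) (lam : ℕ → ℕ) (u : ℕ × ℕ) : Finset (ℕ × ℕ) :=
  ((dgF n lam).filter fun v => v.1 < u.1 ∧ v.2 = u.2 ∧ lam v.1 ≤ lam u.1) ∪
    ((augF n lam).filter fun v => u.1 < v.1 ∧ v.2 + 1 = u.2 ∧ lam v.1 < lam u.1)

/-- `a(u) = |arm(u)|`. -/
def armCard (n : ℕ) (lam : ℕ → ℕ) (u : ℕ × ℕ) : ℕ := (armF n lam u).card

/-- The number of inversions of `σ̂`: attacking pairs `u, u'` with `σ̂(u) < σ̂(u')`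
and (same row with `u` to the left, or `u'` one row above `u` strictly to the left). -/
def invCard (n : ℕ) (lam : ℕ → ℕ) (σ : ℕ × ℕ → ℕ) : ℕ :=
  ((augF n lam ×ˢ augF n lam).filter fun p =>
    aug σ p.1 < aug σ p.2 ∧
      ((p.1.2 = p.2.2 ∧ p.1.1 < p.2.1) ∨ (p.2.2 = p.1.2 + 1 ∧ p.2.1 < p.1.1))).card

/-- The descent set of `σ̂`. -/
def desF (n : ℕ) (lam : ℕ → ℕ) (σ : ℕ × ℕ → ℕ) : Finset (ℕ × ℕ) :=
  (dgF n lam).filter fun u => aug σ (dbox u) < aug σ u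

/-- The statistic `coinv(σ̂)` (as an integer). -/
def coinv (n : ℕ) (lam : ℕ → ℕ) (σ : ℕ × ℕ → ℕ) : ℤ :=
  (∑ u ∈ dgF n lam, (armCard n lam u : ℤ)) - invCard n lam σ +
    (((Finset.Icc 1 n ×ˢ Finset.Icc 1 n).filter fun p =>
      p.1 < p.2 ∧ lam p.1 ≤ lam p.2).card : ℤ) +
    ∑ u ∈ desF n lam σ, (armCard n lam u : ℤ)

/-- The statistic `T(σ)`. -/
def Tstat (n : ℕ) (lam : ℕ → ℕ) (σ : ℕ × ℕ → ℕ) : ℤ :=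
  coinv n lam σ -
    ∑ u ∈ (dgF n lam).filter fun u => aug σ u ≠ aug σ (dbox u), (armCard n lam u : ℤ)

/-- Antidominant composition: `λ_1 ≤ ⋯ ≤ λ_n`. -/
def Antidominant (n : ℕ) (lam : ℕ → ℕ) : Prop :=
  ∀ i j, 1 ≤ i → i ≤ j → j ≤ n → lam i ≤ lam j

/-- Appropriate filling: non-attacking with `T(σ) = 0`. -/
def Appropriate (n : ℕ) (lam : ℕ → ℕ) (σ : ℕ × ℕ → ℕ) : Prop :=
  IsFilling n lam σ ∧ NonAttacking n lam σ ∧ Tstat n lam σ = 0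

/-- The operation `π` on compositions: `π(λ) = (λ_n + 1, λ_1, …, λ_{n-1})`. -/
def piComp (n : ℕ) (lam : ℕ → ℕ) : ℕ → ℕ :=
  fun i => if i = 1 then lam n + 1 else lam (i - 1)

/-- The operation `π` on boxes. -/
def piBox (n : ℕ) (u : ℕ × ℕ) : ℕ × ℕ :=
  if u.1 < n then (u.1 + 1, u.2) else (1, u.2 + 1)

/-- Extension by zero of a function defined on the diagram. -/
def ext (n : ℕ) (lam : ℕ → ℕ) (f : {u // u ∈ dgF n lam} → ℕ) : ℕ × ℕ → ℕ :=
  fun u => if h : u ∈ dgF n lam then f ⟨u, h⟩ else 0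

/-- `qstat(σ) = Σ (l(u) + 1)` over boxes `u` with `σ̂(u) < σ̂(d(u))`. -/
def qstat (n : ℕ) (lam : ℕ → ℕ) (σ : ℕ × ℕ → ℕ) : ℕ :=
  ∑ u ∈ (dgF n lam).filter fun u => aug σ u < aug σ (dbox u), (lam u.1 - u.2 + 1)

end CO

namespace CO

theorem mem_dgF' {n : ℕ} {lam : ℕ → ℕ} {u : ℕ × ℕ} :
    u ∈ dgF n lam ↔ 1 ≤ u.1 ∧ u.1 ≤ n ∧ 1 ≤ u.2 ∧ u.2 ≤ lam u.1 := by
  obtain ⟨a, b⟩ := u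
  simp only [dgF, Finset.mem_biUnion, Finset.mem_image, Finset.mem_Icc, Prod.mk.injEq]
  constructor
  · rintro ⟨i, hi, j, hj, rfl, rfl⟩; exact ⟨hi.1, hi.2, hj.1, hj.2⟩
  · rintro ⟨h1, h2, h3, h4⟩; exact ⟨a, ⟨h1, h2⟩, b, ⟨h3, h4⟩, rfl, rfl⟩

theorem mem_augF' {n : ℕ} {lam : ℕ → ℕ} {u : ℕ × ℕ} :
    u ∈ augF n lam ↔ 1 ≤ u.1 ∧ u.1 ≤ n ∧ u.2 ≤ lam u.1 := by
  obtain ⟨a, b⟩ := u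
  simp only [augF, Finset.mem_union, mem_dgF', Finset.mem_image, Finset.mem_Icc,
    Prod.mk.injEq]
  constructor
  · rintro (⟨h1, h2, h3, h4⟩ | ⟨i, hi, rfl, rfl⟩)
    · exact ⟨h1, h2, h4⟩
    · exact ⟨hi.1, hi.2, Nat.zero_le _⟩
  · rintro ⟨h1, h2, h3⟩
    rcases Nat.eq_zero_or_pos b with rfl | hb
    · exact Or.inr ⟨a, ⟨h1, h2⟩, rfl, rfl⟩
    · exact Or.inl ⟨h1, h2, hb, h3⟩

theorem dbox_mem_augF {n : ℕ} {lam : ℕ → ℕ} {u : ℕ × ℕ} (h : u ∈ dgF n lam) :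
    dbox u ∈ augF n lam := by
  rw [mem_dgF'] at h
  rw [mem_augF']
  exact ⟨h.1, h.2.1, le_trans (Nat.sub_le _ _) h.2.2.2⟩

theorem mem_dgF_augF {n : ℕ} {lam : ℕ → ℕ} {u : ℕ × ℕ} (h : u ∈ dgF n lam) :
    u ∈ augF n lam := Finset.mem_union_left _ h

theorem key_ineq (n : ℕ) (lam : ℕ → ℕ) (σ : ℕ × ℕ → ℕ) (hna : NonAttacking n lam σ) :
    ((((dgF n lam).filter fun u => ¬ aug σ u < aug σ (dbox u)).sigma fun u =>
        armF n lam u).card +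
      (((Finset.Icc 1 n ×ˢ Finset.Icc 1 n).filter fun p =>
        p.1 < p.2 ∧ lam p.1 ≤ lam p.2)).card
      ≤ invCard n lam σ) := by
  classical
  set S2 := ((dgF n lam).filter fun u => ¬ aug σ u < aug σ (dbox u)).sigma
      (fun u => armF n lam u) with hS2
  set S1 := ((Finset.Icc 1 n ×ˢ Finset.Icc 1 n).filter fun p =>
      p.1 < p.2 ∧ lam p.1 ≤ lam p.2) with hS1
  set InvS := ((augF n lam ×ˢ augF n lam).filter fun p =>
      aug σ p.1 < aug σ p.2 ∧
        ((p.1.2 = p.2.2 ∧ p.1.1 < p.2.1) ∨ (p.2.2 = p.1.2 + 1 ∧ p.2.1 < p.1.1))) with hInvS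
  have hInvCard : invCard n lam σ = InvS.card := rfl
  set f2 : (Σ _ : ℕ × ℕ, ℕ × ℕ) → (ℕ × ℕ) × (ℕ × ℕ) :=
    fun t => if aug σ t.2 < aug σ t.1 then (t.2, t.1) else ((t.1.1, t.1.2 - 1), t.2) with hf2
  set g : (ℕ × ℕ) × (ℕ × ℕ) → (Σ _ : ℕ × ℕ, ℕ × ℕ) :=
    fun p => if p.1.2 = p.2.2 then
        (if lam p.1.1 ≤ lam p.2.1 then ⟨p.2, p.1⟩ else ⟨(p.1.1, p.1.2 + 1), p.2⟩)
      else
        (if lam p.2.1 ≤ lam p.1.1 then ⟨(p.1.1, p.2.2), p.2⟩ else ⟨p.2, p.1⟩) with hg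
  set f1 : ℕ × ℕ → (ℕ × ℕ) × (ℕ × ℕ) := fun p => ((p.1, 0), (p.2, 0)) with hf1
  -- structural facts about elements of S2
  have hmain : ∀ t ∈ S2, f2 t ∈ InvS ∧ g (f2 t) = t ∧
      ((f2 t).2.2 ≠ 0 ∨ lam (f2 t).2.1 < lam (f2 t).1.1) := by
    rintro ⟨u, w⟩ ht
    rw [hS2, Finset.mem_sigma, Finset.mem_filter] at ht
    obtain ⟨⟨hu, hub⟩, hw⟩ := ht
    have hu' : u ∈ dgF n lam := hu
    have hble : aug σ (dbox u) ≤ aug σ u := Nat.not_lt.mp hub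
    have hu2 : 1 ≤ u.2 := (mem_dgF'.mp hu').2.2.1
    have hdb : dbox u ∈ augF n lam := dbox_mem_augF hu'
    have huA : u ∈ augF n lam := mem_dgF_augF hu'
    rw [armF, Finset.mem_union, Finset.mem_filter, Finset.mem_filter] at hw
    rcases hw with ⟨hwdg, hw1, hw2, hw3⟩ | ⟨hwaug, hw1, hw2, hw3⟩
    · -- type A : w in row u.2, left of u, lam w.1 ≤ lam u.1
      have hwdg' : w ∈ dgF n lam := hwdg
      have hw1' : w.1 < u.1 := hw1
      have hw2' : w.2 = u.2 := hw2
      have hw3' : lam w.1 ≤ lam u.1 := hw3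
      have hwA : w ∈ augF n lam := mem_dgF_augF hwdg'
      have hwne : aug σ u ≠ aug σ w := by
        refine hna u huA w hwA ⟨?_, Or.inl hw2'.symm⟩
        intro h; rw [h] at hw1'; exact lt_irrefl _ hw1'
      have hw2pos : 1 ≤ w.2 := (mem_dgF'.mp hwdg').2.2.1
      by_cases hlt : aug σ w < aug σ u
      · have hval : f2 ⟨u, w⟩ = (w, u) := by simp only [hf2]; rw [if_pos hlt]
        rw [hval]
        refine ⟨?_, ?_, ?_⟩
        · rw [hInvS, Finset.mem_filter, Finset.mem_product]
          exact ⟨⟨hwA, huA⟩, hlt, Or.inl ⟨hw2', hw1'⟩⟩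
        · simp only [hg]
          rw [if_pos hw2', if_pos hw3']
        · left; simp only; omega
      · have hvw : aug σ u < aug σ w := lt_of_le_of_ne (Nat.not_lt.mp hlt) hwne
        have hdw : aug σ (dbox u) < aug σ w := lt_of_le_of_lt hble hvw
        have hval : f2 ⟨u, w⟩ = ((u.1, u.2 - 1), w) := by simp only [hf2]; rw [if_neg hlt]
        rw [hval]
        refine ⟨?_, ?_, ?_⟩
        · rw [hInvS, Finset.mem_filter, Finset.mem_product]
          refine ⟨⟨hdb, hwA⟩, hdw, Or.inr ⟨?_, hw1'⟩⟩
          simp only; omega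
        · simp only [hg]
          have hne : ¬ ((u.1, u.2 - 1).2 = w.2) := by simp only; omega
          rw [if_neg hne, if_pos hw3']
          have hq : ((u.1, u.2 - 1).1, w.2) = u := by
            simp only; rw [hw2']
          rw [hq]
        · left; simp only; omega
    · -- type B : w in row u.2 - 1, right of u, lam w.1 < lam u.1
      have hwaug' : w ∈ augF n lam := hwaug
      have hw1' : u.1 < w.1 := hw1
      have hw2' : w.2 + 1 = u.2 := hw2
      have hw3' : lam w.1 < lam u.1 := hw3
      have hwne : aug σ u ≠ aug σ w := by
        refine hna u huA w hwaug' ⟨?_, Or.inr (Or.inl ⟨hw2'.symm, hw1'⟩)⟩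
        intro h; rw [h] at hw1'; exact lt_irrefl _ hw1'
      have hnle : ¬ (lam u.1 ≤ lam w.1) := not_le.mpr hw3'
      by_cases hlt : aug σ w < aug σ u
      · have hval : f2 ⟨u, w⟩ = (w, u) := by simp only [hf2]; rw [if_pos hlt]
        rw [hval]
        refine ⟨?_, ?_, ?_⟩
        · rw [hInvS, Finset.mem_filter, Finset.mem_product]
          exact ⟨⟨hwaug', huA⟩, hlt, Or.inr ⟨hw2'.symm, hw1'⟩⟩
        · simp only [hg]
          have hne : ¬ (w.2 = u.2) := by omega
          rw [if_neg hne, if_neg hnle]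
        · left; simp only; omega
      · have hvw : aug σ u < aug σ w := lt_of_le_of_ne (Nat.not_lt.mp hlt) hwne
        have hdw : aug σ (dbox u) < aug σ w := lt_of_le_of_lt hble hvw
        have hval : f2 ⟨u, w⟩ = ((u.1, u.2 - 1), w) := by simp only [hf2]; rw [if_neg hlt]
        rw [hval]
        refine ⟨?_, ?_, ?_⟩
        · rw [hInvS, Finset.mem_filter, Finset.mem_product]
          refine ⟨⟨hdb, hwaug'⟩, hdw, Or.inl ⟨?_, hw1'⟩⟩
          simp only; omega
        · simp only [hg]
          have heq : ((u.1, u.2 - 1).2 = w.2) := by simp only; omega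
          rw [if_pos heq, if_neg hnle]
          have hq : ((u.1, u.2 - 1).1, (u.1, u.2 - 1).2 + 1) = u := by
            simp only; rw [show u.2 - 1 + 1 = u.2 by omega]
          rw [hq]
        · right; simp only; omega
  -- facts about S1
  have hmain1 : ∀ p ∈ S1, f1 p ∈ InvS := by
    intro p hp
    rw [hS1, Finset.mem_filter, Finset.mem_product, Finset.mem_Icc, Finset.mem_Icc] at hp
    obtain ⟨⟨h1, h2⟩, h3, h4⟩ := hp
    rw [hf1, hInvS, Finset.mem_filter, Finset.mem_product]
    refine ⟨⟨mem_augF'.mpr ⟨h1.1, h1.2, Nat.zero_le _⟩,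
      mem_augF'.mpr ⟨h2.1, h2.2, Nat.zero_le _⟩⟩, ?_, Or.inl ⟨rfl, h3⟩⟩
    simp [aug, h3]
  -- injectivity
  have hinj2 : Set.InjOn f2 S2 := by
    intro x hx y hy hxy
    have := (hmain x hx).2.1
    have h2 := (hmain y hy).2.1
    rw [← this, ← h2, hxy]
  have hinj1 : Set.InjOn f1 S1 := by
    intro x hx y hy hxy
    rw [hf1] at hxy
    have h1 := congrArg (fun q => q.1.1) hxy
    have h2 := congrArg (fun q => q.2.1) hxy
    exact Prod.ext h1 h2
  -- disjointness of images
  have hdisj : Disjoint (S2.image f2) (S1.image f1) := by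
    rw [Finset.disjoint_left]
    intro p hp hq
    rw [Finset.mem_image] at hp hq
    obtain ⟨t, ht, rfl⟩ := hp
    obtain ⟨q, hq', hfq⟩ := hq
    have h3 := (hmain t ht).2.2
    rw [hS1, Finset.mem_filter] at hq'
    obtain ⟨_, h4, h5⟩ := hq'
    rw [hf1] at hfq
    have e1 : (f2 t).1.1 = q.1 := by rw [← hfq]
    have e2 : (f2 t).2.1 = q.2 := by rw [← hfq]
    have e3 : (f2 t).2.2 = 0 := by rw [← hfq]
    rcases h3 with h3 | h3
    · exact h3 e3
    · rw [e1, e2] at h3; omega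
  -- combine
  have hsub : S2.image f2 ∪ S1.image f1 ⊆ InvS := by
    intro p hp
    rw [Finset.mem_union, Finset.mem_image, Finset.mem_image] at hp
    rcases hp with ⟨t, ht, rfl⟩ | ⟨q, hq, rfl⟩
    · exact (hmain t ht).1
    · exact hmain1 q hq
  calc S2.card + S1.card
      = (S2.image f2).card + (S1.image f1).card := by
        rw [Finset.card_image_of_injOn hinj2, Finset.card_image_of_injOn hinj1]
    _ = (S2.image f2 ∪ S1.image f1).card := (Finset.card_union_of_disjoint hdisj).symm
    _ ≤ InvS.card := Finset.card_le_card hsub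
    _ = invCard n lam σ := hInvCard.symm

theorem Tstat_eq (n : ℕ) (lam : ℕ → ℕ) (σ : ℕ × ℕ → ℕ) :
    Tstat n lam σ =
      (∑ u ∈ (dgF n lam).filter fun u => ¬ aug σ u < aug σ (dbox u),
        (armCard n lam u : ℤ)) +
      (((Finset.Icc 1 n ×ˢ Finset.Icc 1 n).filter fun p =>
        p.1 < p.2 ∧ lam p.1 ≤ lam p.2).card : ℤ) - invCard n lam σ := by
  have h1 : ∑ u ∈ (dgF n lam).filter (fun u => aug σ u ≠ aug σ (dbox u)),
      (armCard n lam u : ℤ)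
      = (∑ u ∈ desF n lam σ, (armCard n lam u : ℤ)) +
        ∑ u ∈ (dgF n lam).filter (fun u => aug σ u < aug σ (dbox u)),
          (armCard n lam u : ℤ) := by
    rw [desF, Finset.sum_filter, Finset.sum_filter, Finset.sum_filter,
      ← Finset.sum_add_distrib]
    refine Finset.sum_congr rfl fun x _ => ?_
    split_ifs <;> omega
  have h2 : (∑ u ∈ (dgF n lam).filter (fun u => aug σ u < aug σ (dbox u)),
      (armCard n lam u : ℤ)) +
      ∑ u ∈ (dgF n lam).filter (fun u => ¬ aug σ u < aug σ (dbox u)),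
        (armCard n lam u : ℤ)
      = ∑ u ∈ dgF n lam, (armCard n lam u : ℤ) :=
    Finset.sum_filter_add_sum_filter_not _ _ _
  rw [Tstat, coinv, h1]
  linarith

end CO

open CO in
/-- Lemma `inequalitypoweroft`. Let `λ` be an antidominant
composition, `0 ≤ r ≤ n - 1`, and `μ = π^r(λ)`. Then every non-attacking filling
`σ` of `dg'(μ)` satisfies `T(σ) ≤ 0`. -/
theorem Tstat_nonpos (n : ℕ) (hn : 1 ≤ n) (lam : ℕ → ℕ)
    (hanti : Antidominant n lam) (r : ℕ) (hr : r ≤ n - 1)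
    (mu : ℕ → ℕ) (hmu : mu = (piComp n)^[r] lam)
    (σ : ℕ × ℕ → ℕ) (hfill : IsFilling n mu σ) (hna : NonAttacking n mu σ) :
    Tstat n mu σ ≤ 0 := by
  have hkey := key_ineq n mu σ hna
  rw [Finset.card_sigma] at hkey
  have hc : ((((dgF n mu).filter fun u => ¬ aug σ u < aug σ (dbox u)).sum
      fun u => armCard n mu u : ℕ) : ℤ) +
      ((((Finset.Icc 1 n ×ˢ Finset.Icc 1 n).filter fun p =>
        p.1 < p.2 ∧ mu p.1 ≤ mu p.2).card : ℕ) : ℤ) ≤ (invCard n mu σ : ℤ) := by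
    exact_mod_cast hkey
  rw [Tstat_eq]
  push_cast at hc ⊢
  linarith
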